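/- (Proposition 3) Let N = max_i end^{v_i} over all ℋ-nodes v₁,…,v_h of the syntax tree of Φ. For any signal x : ℕ → 𝒳, any k > N, any node v of the syntax tree and any t ∈ [int^v, end^v]: the induced satisfaction-vector entry of v computed from the basic set I(x_{0:k-1}) satisfies ι^v_{I(x_{0:k-1})}[t] = 1 if and only if (x, t) ⊨ Φ^v. -/
import Mathlib


namespace STLMon

/-- Three-valued satisfaction status: violated `0`, satisfied `1`, uncertain `?`. -/
inductive SatVal : Type
  | zero : SatVal
  | one : SatVal
  | unk : SatVal
deriving DecidableEq

/-- Direction to a child in the syntax tree (`left` is also used for only-children). -/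
inductive Dir : Type
  | left : Dir
  | right : Dir
deriving DecidableEq

/-- STL fragment (3): `Φ ::= G_{[a,b]} Φ | Φ₁ U'_{[a,b]} Φ₂ | Φ₁ ∧ Φ₂ | x ∈ ℋ`. -/
inductive Frag (X : Type) : Type
  | reg : Set X → Frag X
  | conj : Frag X → Frag X → Frag X
  | glob : ℕ → ℕ → Frag X → Frag X
  | untl : ℕ → ℕ → Frag X → Frag X → Frag X

namespace Frag

variable {X : Type}

/-- Semantics of the fragment: `fsat Φ x k` means `(x,k) ⊨ Φ`. -/
def fsat : Frag X → (ℕ → X) → ℕ → Prop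
  | reg H, x, k => x k ∈ H
  | conj φ ψ, x, k => fsat φ x k ∧ fsat ψ x k
  | glob a b φ, x, k => ∀ k', k + a ≤ k' → k' ≤ k + b → fsat φ x k'
  | untl a b φ ψ, x, k =>
      ∃ k', k + a ≤ k' ∧ k' ≤ k + b ∧ fsat ψ x k' ∧
        ∀ k'', k + a ≤ k'' → k'' ≤ k' → fsat φ x k''

/-- A node of the syntax tree of `Φ` is a path (list of directions) from the root;
`subAt Φ p` is the subformula `Φ^v` rooted at the node `v` with path `p`, if it exists. -/
def subAt : Frag X → List Dir → Option (Frag X)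
  | φ, [] => some φ
  | conj φ _, Dir.left :: p => subAt φ p
  | conj _ ψ, Dir.right :: p => subAt ψ p
  | glob _ _ φ, Dir.left :: p => subAt φ p
  | untl _ _ φ _, Dir.left :: p => subAt φ p
  | untl _ _ _ ψ, Dir.right :: p => subAt ψ p
  | _, _ => none

/-- Left endpoint `int^v` of the evaluation horizon of node `v`:
the sum of `a^{v'}` over all (strict) ancestors `v'` of `v`. -/
def intOf : Frag X → List Dir → ℕ
  | _, [] => 0
  | conj φ _, Dir.left :: p => intOf φ p
  | conj _ ψ, Dir.right :: p => intOf ψ p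
  | glob a _ φ, Dir.left :: p => a + intOf φ p
  | untl a _ φ _, Dir.left :: p => a + intOf φ p
  | untl a _ _ ψ, Dir.right :: p => a + intOf ψ p
  | _, _ => 0

/-- Right endpoint `end^v` of the evaluation horizon of node `v`:
the sum of `b^{v'}` over all (strict) ancestors `v'` of `v`. -/
def endOf : Frag X → List Dir → ℕ
  | _, [] => 0
  | conj φ _, Dir.left :: p => endOf φ p
  | conj _ ψ, Dir.right :: p => endOf ψ p
  | glob _ b φ, Dir.left :: p => b + endOf φ p
  | untl _ b φ _, Dir.left :: p => b + endOf φ p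
  | untl _ b _ ψ, Dir.right :: p => b + endOf ψ p
  | _, _ => 0

/-- `p` is an `ℋ`-node (a predicate leaf) of the syntax tree of `Φ`. -/
def IsHNode (Φ : Frag X) (p : List Dir) : Prop :=
  ∃ H : Set X, subAt Φ p = some (reg H)

/-- The satisfaction region `ℋ^v` attached to the `ℋ`-node at path `p`. -/
def regionAt (Φ : Frag X) (p : List Dir) : Set X :=
  match subAt Φ p with
  | some (reg H) => H
  | _ => ∅

/-- `(p, t)` is a meaningful entry of a basic set: `p` is an `ℋ`-node and
`t` lies in its evaluation horizon `[int^p, end^p]`. -/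
def Relevant (Φ : Frag X) (p : List Dir) (t : ℕ) : Prop :=
  IsHNode Φ p ∧ intOf Φ p ≤ t ∧ t ≤ endOf Φ p

/-- A basic set of satisfaction vectors: one three-valued entry for each `ℋ`-node
and each instant of its evaluation horizon. -/
def BasicSet (Φ : Frag X) : Type := ∀ p t, Relevant Φ p t → SatVal

/-- The entry of a basic set, totalized by `?` outside the relevant positions. -/
noncomputable def val (Φ : Frag X) (I : BasicSet Φ) (p : List Dir) (t : ℕ) : SatVal :=
  @dite _ (Relevant Φ p t) (Classical.dec _) (fun h => I p t h) (fun _ => SatVal.unk)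

open Classical in
/-- Induced satisfaction vectors (Definition 5): `ind β φ p t` is the induced value
`ι^v[t]` of the node `v` at path `p` carrying subformula `φ`, computed bottom-up from
the values `β` of the `ℋ`-node leaves. -/
noncomputable def ind (β : List Dir → ℕ → SatVal) : Frag X → List Dir → ℕ → SatVal
  | reg _, p, t => β p t
  | conj φ ψ, p, t =>
      if ind β φ (p ++ [Dir.left]) t = SatVal.zero ∨
         ind β ψ (p ++ [Dir.right]) t = SatVal.zero then SatVal.zero
      else if ind β φ (p ++ [Dir.left]) t = SatVal.one ∧
              ind β ψ (p ++ [Dir.right]) t = SatVal.one then SatVal.one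
      else SatVal.unk
  | glob a b φ, p, t =>
      if ∃ t', a ≤ t' ∧ t' ≤ b ∧ ind β φ (p ++ [Dir.left]) (t + t') = SatVal.zero then
        SatVal.zero
      else if ∀ t', a ≤ t' → t' ≤ b → ind β φ (p ++ [Dir.left]) (t + t') = SatVal.one then
        SatVal.one
      else SatVal.unk
  | untl a b φ ψ, p, t =>
      if (∀ t', a ≤ t' → t' ≤ b → ind β ψ (p ++ [Dir.right]) (t + t') = SatVal.zero) ∨
         (∀ t', a ≤ t' → t' ≤ b → ind β ψ (p ++ [Dir.right]) (t + t') = SatVal.one →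
            ∃ t'', a ≤ t'' ∧ t'' ≤ t' ∧ ind β φ (p ++ [Dir.left]) (t + t'') = SatVal.zero) then
        SatVal.zero
      else if ∃ t', a ≤ t' ∧ t' ≤ b ∧ ind β ψ (p ++ [Dir.right]) (t + t') = SatVal.one ∧
              ∀ t'', a ≤ t'' → t'' ≤ t' → ind β φ (p ++ [Dir.left]) (t + t'') = SatVal.one then
        SatVal.one
      else SatVal.unk

open Classical in
/-- Online update of a basic set upon observing state `xk` at instant `k`:
in each `ℋ`-node vector whose horizon contains `k`, only the entry at position `k`
is changed, to `1` if `xk ∈ ℋ^{v_i}` and to `0` otherwise. -/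
noncomputable def updateB (Φ : Frag X) (I : BasicSet Φ) (k : ℕ) (xk : X) : BasicSet Φ :=
  fun p t h =>
    if t = k then (if xk ∈ regionAt Φ p then SatVal.one else SatVal.zero) else I p t h

/-- The initial basic set `I₀`: every entry is `?`. -/
def initB (Φ : Frag X) : BasicSet Φ := fun _ _ _ => SatVal.unk

/-- `basicOf Φ x k` is `I(x_{0:k-1})`, obtained from `I₀` by successive updates
with `x 0, …, x (k-1)`. -/
noncomputable def basicOf (Φ : Frag X) (x : ℕ → X) : ℕ → BasicSet Φ
  | 0 => initB Φ
  | k + 1 => updateB Φ (basicOf Φ x k) k (x k)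

/-- Membership in `𝓘_k`: entries are `?` exactly at positions `t ≥ k`. -/
def InFam (Φ : Frag X) (I : BasicSet Φ) (k : ℕ) : Prop :=
  ∀ p t (h : Relevant Φ p t), (I p t h = SatVal.unk ↔ k ≤ t)

/-- The induced root satisfaction value `ι^root_I[0]` of a basic set `I`. -/
noncomputable def rootVal (Φ : Frag X) (I : BasicSet Φ) : SatVal :=
  ind (val Φ I) Φ [] 0

/-- `Is ∈ succ(I, k)`: `I ∈ 𝕀_k`, `Is ∈ 𝕀_{k+1}`, and `Is` agrees with `I`
on every `ℋ`-node entry at positions `t ∈ [int^v, min(k-1, end^v)]`. -/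
def Succ (Φ : Frag X) (k : ℕ) (I Is : BasicSet Φ) : Prop :=
  InFam Φ I k ∧ rootVal Φ I ≠ SatVal.zero ∧
  InFam Φ Is (k + 1) ∧ rootVal Φ Is ≠ SatVal.zero ∧
  ∀ p t (h : Relevant Φ p t), t < k → I p t h = Is p t h

/-- The consistent region `H_k(I, I_s) = ⋂ᵢ H_{i,k}`, where `H_{i,k}` is `ℋ^{v_i}` if
`ι_s^{v_i}[k] = 1`, the complement of `ℋ^{v_i}` if `ι_s^{v_i}[k] = 0`, and `𝒳` if `k`
is outside the horizon of `v_i`. -/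
def consReg (Φ : Frag X) (Is : BasicSet Φ) (k : ℕ) : Set X :=
  {x | ∀ p (h : Relevant Φ p k),
        (Is p k h = SatVal.zero → x ∉ regionAt Φ p) ∧
        (Is p k h = SatVal.one → x ∈ regionAt Φ p)}

end Frag

/-- Trajectory of the control system `x_{k+1} = f(x_k, u_k)`:
`traj f x u n` is the state after `n` steps from `x` under inputs `u`. -/
def traj {X U : Type} (f : X → U → X) (x : X) (u : ℕ → U) : ℕ → X
  | 0 => x
  | n + 1 => f (traj f x u n) (u n)

/-- The signal obtained from the prefix `xpre` on positions `0, …, k-1` followed by the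
state `xk` at position `k` and the trajectory `ξ_f(xk, u)` afterwards. -/
def runFrom {X U : Type} (f : X → U → X) (k : ℕ) (xpre : ℕ → X) (xk : X) (u : ℕ → U) :
    ℕ → X :=
  fun n => if n < k then xpre n else traj f xk u (n - k)

/-- One-step feasible set `Υ(S) = {x | ∃ u ∈ 𝒰, f(x,u) ∈ S}`. -/
def oneStep {X U : Type} (f : X → U → X) (S : Set X) : Set X :=
  {x | ∃ u : U, f x u ∈ S}

/-- The `I`-determined feasible set `X_k^I`: states `xk` from which some control makes the
signal, consisting of some prefix consistent with `I` followed by `xk` and the resulting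
trajectory, satisfy `Φ`. -/
noncomputable def feasSet {X U : Type} (Φ : Frag X) (f : X → U → X) (k : ℕ)
    (I : Frag.BasicSet Φ) : Set X :=
  {xk | ∃ xpre : ℕ → X, Frag.basicOf Φ xpre k = I ∧
          ∃ u : ℕ → U, Frag.fsat Φ (runFrom f k xpre xk u) 0}

end STLMon

open STLMon STLMon.Frag


section Helpers

variable {X : Type}

theorem subAt_append (Φ : Frag X) (p q : List Dir) (φ : Frag X)
    (h : subAt Φ p = some φ) : subAt Φ (p ++ q) = subAt φ q := by
  induction p generalizing Φ with
  | nil => simp [subAt] at h; subst h; rfl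
  | cons d p ih =>
    cases Φ <;> cases d <;> simp [subAt] at h ⊢ <;> exact ih _ h

theorem intOf_append (Φ : Frag X) (p q : List Dir) (φ : Frag X)
    (h : subAt Φ p = some φ) : intOf Φ (p ++ q) = intOf Φ p + intOf φ q := by
  induction p generalizing Φ with
  | nil => simp [subAt] at h; subst h; simp [intOf]
  | cons d p ih =>
    cases Φ <;> cases d <;> simp [subAt] at h <;>
      simp [intOf, ih _ h] <;> omega

theorem endOf_append (Φ : Frag X) (p q : List Dir) (φ : Frag X)
    (h : subAt Φ p = some φ) : endOf Φ (p ++ q) = endOf Φ p + endOf φ q := by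
  induction p generalizing Φ with
  | nil => simp [subAt] at h; subst h; simp [endOf]
  | cons d p ih =>
    cases Φ <;> cases d <;> simp [subAt] at h <;>
      simp [endOf, ih _ h] <;> omega

open Classical in
theorem val_basicOf (Φ : Frag X) (x : ℕ → X) (k t : ℕ) (p : List Dir)
    (h : Relevant Φ p t) (hlt : t < k) :
    val Φ (basicOf Φ x k) p t =
      (if x t ∈ regionAt Φ p then SatVal.one else SatVal.zero) := by
  induction k with
  | zero => omega
  | succ k ih =>
    show val Φ (updateB Φ (basicOf Φ x k) k (x k)) p t = _
    by_cases hk : t = k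
    · subst hk
      unfold val updateB
      rw [dif_pos h]
      simp
    · have hlt' : t < k := by omega
      have : val Φ (updateB Φ (basicOf Φ x k) k (x k)) p t
          = val Φ (basicOf Φ x k) p t := by
        unfold val updateB
        rw [dif_pos h, dif_pos h, if_neg hk]
      rw [this, ih hlt']

end Helpers

/-- (Proposition 3) If `k > N`, where `N` is the largest right endpoint `end^{v_i}` over
all `ℋ`-nodes, then for any node `v` (path `p`, subformula `φ = Φ^v`) and any
`t ∈ [int^v, end^v]`, the induced entry computed from `I(x_{0:k-1})` satisfies
`ι^v_{I(x_{0:k-1})}[t] = 1` iff `(x, t) ⊨ Φ^v`. -/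


theorem induced_one_iff_sat {X : Type} (Φ : Frag X) (x : ℕ → X) (k : ℕ)
    (hk : ∀ p, IsHNode Φ p → endOf Φ p < k)
    (p : List Dir) (φ : Frag X) (hφ : subAt Φ p = some φ)
    (t : ℕ) (ht1 : intOf Φ p ≤ t) (ht2 : t ≤ endOf Φ p) :
    ind (val Φ (basicOf Φ x k)) φ p t = SatVal.one ↔ fsat φ x t := by
  induction φ generalizing p t with
  | reg H =>
    have hrel : Relevant Φ p t := ⟨⟨H, hφ⟩, ht1, ht2⟩
    have hlt : t < k := lt_of_le_of_lt ht2 (hk p ⟨H, hφ⟩)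
    have hreg : regionAt Φ p = H := by unfold regionAt; rw [hφ]
    have hind : ind (val Φ (basicOf Φ x k)) (reg H) p t = val Φ (basicOf Φ x k) p t := rfl
    rw [hind, val_basicOf Φ x k t p hrel hlt, hreg]
    by_cases hx : x t ∈ H <;> simp [fsat, hx]
  | conj φ ψ ihφ ihψ =>
    have hφl : subAt Φ (p ++ [Dir.left]) = some φ := by
      rw [subAt_append Φ p _ _ hφ]; simp [subAt]
    have hφr : subAt Φ (p ++ [Dir.right]) = some ψ := by
      rw [subAt_append Φ p _ _ hφ]; simp [subAt]
    have hil : intOf Φ (p ++ [Dir.left]) = intOf Φ p := by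
      rw [intOf_append Φ p _ _ hφ]; simp [intOf]
    have hel : endOf Φ (p ++ [Dir.left]) = endOf Φ p := by
      rw [endOf_append Φ p _ _ hφ]; simp [endOf]
    have hir : intOf Φ (p ++ [Dir.right]) = intOf Φ p := by
      rw [intOf_append Φ p _ _ hφ]; simp [intOf]
    have her : endOf Φ (p ++ [Dir.right]) = endOf Φ p := by
      rw [endOf_append Φ p _ _ hφ]; simp [endOf]
    have hl := ihφ (p ++ [Dir.left]) hφl t (by omega) (by omega)
    have hr := ihψ (p ++ [Dir.right]) hφr t (by omega) (by omega)
    simp only [ind]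
    split_ifs with h1 h2
    · refine iff_of_false (by decide) ?_
      rintro ⟨ha, hb⟩
      rcases h1 with h1 | h1
      · rw [hl.mpr ha] at h1; exact absurd h1 (by decide)
      · rw [hr.mpr hb] at h1; exact absurd h1 (by decide)
    · exact iff_of_true rfl ⟨hl.mp h2.1, hr.mp h2.2⟩
    · refine iff_of_false (by decide) ?_
      rintro ⟨ha, hb⟩
      exact h2 ⟨hl.mpr ha, hr.mpr hb⟩
  | glob a b φ ih =>
    have hφl : subAt Φ (p ++ [Dir.left]) = some φ := by
      rw [subAt_append Φ p _ _ hφ]; simp [subAt]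
    have hil : intOf Φ (p ++ [Dir.left]) = intOf Φ p + a := by
      rw [intOf_append Φ p _ _ hφ]; simp [intOf]
    have hel : endOf Φ (p ++ [Dir.left]) = endOf Φ p + b := by
      rw [endOf_append Φ p _ _ hφ]; simp [endOf]
    have hch : ∀ t', a ≤ t' → t' ≤ b →
        (ind (val Φ (basicOf Φ x k)) φ (p ++ [Dir.left]) (t + t') = SatVal.one ↔
          fsat φ x (t + t')) := fun t' h1 h2 =>
      ih (p ++ [Dir.left]) hφl (t + t') (by omega) (by omega)
    simp only [ind]
    split_ifs with h1 h2
    · obtain ⟨t', ha, hb, hz⟩ := h1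
      refine iff_of_false (by decide) ?_
      intro hs
      have hone := (hch t' ha hb).mpr (hs (t + t') (by omega) (by omega))
      rw [hone] at hz; exact absurd hz (by decide)
    · refine iff_of_true rfl ?_
      intro k' hk1 hk2
      have heq : t + (k' - t) = k' := by omega
      exact heq ▸ (hch (k' - t) (by omega) (by omega)).mp (h2 _ (by omega) (by omega))
    · refine iff_of_false (by decide) ?_
      intro hs
      exact h2 fun t' ha hb => (hch t' ha hb).mpr (hs (t + t') (by omega) (by omega))
  | untl a b φ ψ ihφ ihψ =>
    have hφl : subAt Φ (p ++ [Dir.left]) = some φ := by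
      rw [subAt_append Φ p _ _ hφ]; simp [subAt]
    have hφr : subAt Φ (p ++ [Dir.right]) = some ψ := by
      rw [subAt_append Φ p _ _ hφ]; simp [subAt]
    have hil : intOf Φ (p ++ [Dir.left]) = intOf Φ p + a := by
      rw [intOf_append Φ p _ _ hφ]; simp [intOf]
    have hel : endOf Φ (p ++ [Dir.left]) = endOf Φ p + b := by
      rw [endOf_append Φ p _ _ hφ]; simp [endOf]
    have hir : intOf Φ (p ++ [Dir.right]) = intOf Φ p + a := by
      rw [intOf_append Φ p _ _ hφ]; simp [intOf]
    have her : endOf Φ (p ++ [Dir.right]) = endOf Φ p + b := by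
      rw [endOf_append Φ p _ _ hφ]; simp [endOf]
    have hchl : ∀ t', a ≤ t' → t' ≤ b →
        (ind (val Φ (basicOf Φ x k)) φ (p ++ [Dir.left]) (t + t') = SatVal.one ↔
          fsat φ x (t + t')) := fun t' h1 h2 =>
      ihφ (p ++ [Dir.left]) hφl (t + t') (by omega) (by omega)
    have hchr : ∀ t', a ≤ t' → t' ≤ b →
        (ind (val Φ (basicOf Φ x k)) ψ (p ++ [Dir.right]) (t + t') = SatVal.one ↔
          fsat ψ x (t + t')) := fun t' h1 h2 =>
      ihψ (p ++ [Dir.right]) hφr (t + t') (by omega) (by omega)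
    simp only [ind]
    split_ifs with h1 h2
    · refine iff_of_false (by decide) ?_
      rintro ⟨k', hk1, hk2, hψs, hφall⟩
      have heq : t + (k' - t) = k' := by omega
      have hone : ind (val Φ (basicOf Φ x k)) ψ (p ++ [Dir.right]) (t + (k' - t)) =
          SatVal.one := (hchr (k' - t) (by omega) (by omega)).mpr (by rwa [heq])
      rcases h1 with h1 | h1
      · have := h1 (k' - t) (by omega) (by omega)
        rw [hone] at this; exact absurd this (by decide)
      · obtain ⟨t'', ha'', hb'', hz⟩ := h1 (k' - t) (by omega) (by omega) hone
        have : ind (val Φ (basicOf Φ x k)) φ (p ++ [Dir.left]) (t + t'') = SatVal.one :=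
          (hchl t'' ha'' (by omega)).mpr (hφall (t + t'') (by omega) (by omega))
        rw [this] at hz; exact absurd hz (by decide)
    · obtain ⟨t', ha, hb, hone, hall⟩ := h2
      refine iff_of_true rfl ?_
      refine ⟨t + t', by omega, by omega, (hchr t' ha hb).mp hone, ?_⟩
      intro k'' h1' h2'
      have heq : t + (k'' - t) = k'' := by omega
      exact heq ▸ (hchl (k'' - t) (by omega) (by omega)).mp
        (hall (k'' - t) (by omega) (by omega))
    · refine iff_of_false (by decide) ?_
      rintro ⟨k', hk1, hk2, hψs, hφall⟩
      have heq : t + (k' - t) = k' := by omega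
      refine h2 ⟨k' - t, by omega, by omega,
        (hchr (k' - t) (by omega) (by omega)).mpr (by rwa [heq]), ?_⟩
      intro t'' ha'' hb''
      exact (hchl t'' ha'' (by omega)).mpr (hφall (t + t'') (by omega) (by omega))
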